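/- Let S be a monoid acting on an R-algebra A by algebra endomorphisms, with skew semigroup ring A*S. The R-module of S-invariant elements (A*S)^S is a cyclic right ideal of A*S, generated (if non-zero) by 1*t where t = Σ_{x∈I} x and I is a left ideal of S which is a finite group. Consequently Hom_{A*S}(A, A*S) ≠ 0 if and only if S contains a left ideal which is a finite group; and if S is left cancellative then this holds if and only if S is a finite group. -/

import Mathlib

universe u v w

/-- `I` is a (finite, non-empty) left ideal of the monoid `S` which is a group. -/
def IsFiniteGroupLeftIdeal {S : Type v} [Monoid S] (I : Finset S) : Prop :=
  I.Nonempty ∧ (∀ s : S, ∀ x ∈ I, s * x ∈ I) ∧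
    ∃ e ∈ I, (∀ x ∈ I, e * x = x ∧ x * e = x) ∧ ∀ x ∈ I, ∃ y ∈ I, x * y = e ∧ y * x = e

section Skew

variable (S : Type v) (A : Type w) [Monoid S] [Ring A] [MulSemiringAction S A]

/-- Left multiplication by `1 * s` in the skew semigroup ring `A * S` (elements of which are
represented as finitely supported functions `S →₀ A`, `γ = Σ aₓ * x`):
`(1*s)(Σ aₓ * x) = Σ aₓˢ * (s x)`. -/
noncomputable def skewLeftMul (s : S) (γ : S →₀ A) : S →₀ A :=
  γ.sum fun x a => Finsupp.single (s * x) (s • a)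

/-- An element of the skew semigroup ring `A * S` is `S`-invariant if `(1*s)·γ = γ` for all
`s ∈ S`. -/
def IsSkewInvariant (γ : S →₀ A) : Prop := ∀ s : S, skewLeftMul S A s γ = γ

end Skew

/-!
If `γ` is invariant, then `γ = (1*s)γ` forces every left multiplication `x ↦ s x` to map the finite
support `F` of `γ` injectively onto itself, and `γ (s x) = s • γ x` on `F`. So `F` is a finite left
ideal on which `S` acts by bijections; for an idempotent `e ∈ F` (which exists in any finite
semigroup) `F e` is a left ideal which is a group with identity `e`.

Conversely, if `I` is such a group left ideal, then `z ↦ s z` permutes `I` for every `s`, so every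
`Σ_{z ∈ I} (1*z) γ'` is invariant. An invariant `γ` is peeled off one orbit at a time: for `y`
in its support, the restriction of `γ` to the orbit `I y` is `Σ_{z ∈ I} (1*z)(γ(y) * y)`, and the
rest is again invariant with smaller support. Under left cancellation the identity of `I` is `1`, so
`I = S`.
-/

open Finsupp

section SkewLeftMul

variable {S : Type*} {A : Type*} [Monoid S] [Ring A] [MulSemiringAction S A]

theorem skewLeftMul_eq_mapDomain (s : S) (γ : S →₀ A) :
    skewLeftMul S A s γ = mapDomain (s * ·) (γ.mapRange (s • ·) (smul_zero s)) := by
  rw [skewLeftMul, mapDomain, sum_mapRange_index fun _ => single_zero _]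

variable (S A) in
noncomputable def skewLeftMulHom (s : S) : (S →₀ A) →+ (S →₀ A) where
  toFun := skewLeftMul S A s
  map_zero' := by simp [skewLeftMul]
  map_add' γ δ := by
    simp only [skewLeftMul_eq_mapDomain, mapRange_add (smul_add s), mapDomain_add]

theorem skewLeftMul_zero (s : S) : skewLeftMul S A s 0 = 0 :=
  map_zero (skewLeftMulHom S A s)

theorem skewLeftMul_add (s : S) (γ δ : S →₀ A) :
    skewLeftMul S A s (γ + δ) = skewLeftMul S A s γ + skewLeftMul S A s δ :=
  map_add (skewLeftMulHom S A s) γ δ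

theorem skewLeftMul_sub (s : S) (γ δ : S →₀ A) :
    skewLeftMul S A s (γ - δ) = skewLeftMul S A s γ - skewLeftMul S A s δ :=
  map_sub (skewLeftMulHom S A s) γ δ

theorem skewLeftMul_sum {ι : Type*} (s : S) (t : Finset ι) (f : ι → S →₀ A) :
    skewLeftMul S A s (∑ i ∈ t, f i) = ∑ i ∈ t, skewLeftMul S A s (f i) :=
  map_sum (skewLeftMulHom S A s) f t

theorem skewLeftMul_single (s x : S) (a : A) :
    skewLeftMul S A s (single x a) = single (s * x) (s • a) :=
  sum_single_index (by rw [smul_zero, single_zero])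

theorem skewLeftMul_skewLeftMul (s t : S) (γ : S →₀ A) :
    skewLeftMul S A s (skewLeftMul S A t γ) = skewLeftMul S A (s * t) γ := by
  induction γ using Finsupp.induction_linear with
  | zero => simp only [skewLeftMul_zero]
  | add γ δ hγ hδ => rw [skewLeftMul_add, skewLeftMul_add, skewLeftMul_add, hγ, hδ]
  | single x a =>
    rw [skewLeftMul_single, skewLeftMul_single, skewLeftMul_single, mul_assoc, mul_smul]

theorem support_skewLeftMul_subset [DecidableEq S] (s : S) (γ : S →₀ A) :
    (skewLeftMul S A s γ).support ⊆ γ.support.image (s * ·) := by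
  rw [skewLeftMul_eq_mapDomain]
  exact mapDomain_support.trans (Finset.image_subset_image support_mapRange)

theorem skewLeftMul_apply_mul {s x : S} {γ : S →₀ A} (hs : Set.InjOn (s * ·) γ.support)
    (hx : x ∈ γ.support) : skewLeftMul S A s γ (s * x) = s • γ x := by
  rw [skewLeftMul_eq_mapDomain, mapDomain_apply' _ _ (Finset.coe_subset.2 support_mapRange) hs hx,
    mapRange_apply]

end SkewLeftMul

namespace IsSkewInvariant

variable {S : Type*} {A : Type*} [Monoid S] [Ring A] [MulSemiringAction S A] {γ : S →₀ A}

theorem image_support [DecidableEq S] (hγ : IsSkewInvariant S A γ) (s : S) :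
    γ.support.image (s * ·) = γ.support := by
  refine (Finset.eq_of_subset_of_card_le ?_ Finset.card_image_le).symm
  simpa only [hγ s] using support_skewLeftMul_subset (A := A) s γ

theorem mul_mem_support (hγ : IsSkewInvariant S A γ) (s : S) {x : S} (hx : x ∈ γ.support) :
    s * x ∈ γ.support := by
  classical
  exact hγ.image_support s ▸ Finset.mem_image_of_mem _ hx

theorem injOn_mul_left (hγ : IsSkewInvariant S A γ) (s : S) : Set.InjOn (s * ·) γ.support := by
  classical
  exact Finset.injOn_of_card_image_eq (by rw [hγ.image_support s])

theorem apply_mul (hγ : IsSkewInvariant S A γ) (s : S) {x : S} (hx : x ∈ γ.support) :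
    γ (s * x) = s • γ x := by
  conv_lhs => rw [← hγ s]
  exact skewLeftMul_apply_mul (hγ.injOn_mul_left s) hx

theorem sub {δ : S →₀ A} (hγ : IsSkewInvariant S A γ) (hδ : IsSkewInvariant S A δ) :
    IsSkewInvariant S A (γ - δ) := fun s => by
  rw [skewLeftMul_sub, hγ s, hδ s]

end IsSkewInvariant

namespace IsFiniteGroupLeftIdeal

variable {S : Type*} [Monoid S] {I : Finset S}

theorem bijOn_mul_left (hI : IsFiniteGroupLeftIdeal I) (s : S) : Set.BijOn (s * ·) I I := by
  obtain ⟨-, hmul, e, heI, he, hinv⟩ := hI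
  obtain ⟨u, -, hsu, hus⟩ := hinv (s * e) (hmul s e heI)
  have hse : ∀ z ∈ I, s * z = s * e * z := fun z hz => by rw [mul_assoc, (he z hz).1]
  refine Set.InvOn.bijOn (f' := (u * ·)) ⟨fun z hz => ?_, fun z hz => ?_⟩
    (fun z hz => hmul s z hz) (fun z hz => hmul u z hz)
  · simp only
    rw [hse z hz, ← mul_assoc, hus, (he z hz).1]
  · simp only
    rw [hse _ (hmul u z hz), ← mul_assoc, hsu, (he z hz).1]

theorem injOn_mul_right (hI : IsFiniteGroupLeftIdeal I) (y : S) : Set.InjOn (· * y) I := by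
  obtain ⟨-, hmul, e, heI, he, hinv⟩ := hI
  -- cancel `u` against the inverse of `x * e ∈ I`
  have fix_eq : ∀ u ∈ I, ∀ x, u * x = x → u = e := fun u hu x hux => by
    obtain ⟨w, -, hw, -⟩ := hinv (x * e) (hmul x e heI)
    calc u = u * (x * e * w) := by rw [hw, (he u hu).2]
      _ = e := by rw [← mul_assoc, ← mul_assoc, hux, hw]
  intro a ha b hb hab
  obtain ⟨b', -, hbb', hb'b⟩ := hinv b hb
  have hb'a : b' * a = e := fix_eq _ (hmul b' a ha) (e * y) <| by
    simp only at hab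
    rw [← mul_assoc, mul_assoc b', (he a ha).2, mul_assoc, hab, ← mul_assoc, hb'b]
  calc a = b * b' * a := by rw [hbb', (he a ha).1]
    _ = b := by rw [mul_assoc, hb'a, (he b hb).2]

end IsFiniteGroupLeftIdeal

section Invariants

variable {S : Type*} {A : Type*} [Monoid S] [Ring A] [MulSemiringAction S A] {I : Finset S}

theorem IsFiniteGroupLeftIdeal.isSkewInvariant_sum_skewLeftMul (hI : IsFiniteGroupLeftIdeal I)
    (γ' : S →₀ A) : IsSkewInvariant S A (∑ z ∈ I, skewLeftMul S A z γ') := fun s => by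
  simp only [skewLeftMul_sum, skewLeftMul_skewLeftMul]
  have hs := hI.bijOn_mul_left s
  exact Finset.sum_nbij (s * ·) (fun _ hz => hs.mapsTo hz) hs.injOn hs.surjOn fun _ _ => rfl

theorem IsSkewInvariant.sum_skewLeftMul_single_eq_filter [DecidableEq S]
    (hI : IsFiniteGroupLeftIdeal I) {γ : S →₀ A} (hγ : IsSkewInvariant S A γ) {y : S}
    (hy : y ∈ γ.support) :
    ∑ z ∈ I, skewLeftMul S A z (single y (γ y)) = γ.filter (· ∈ I.image (· * y)) :=
  calc ∑ z ∈ I, skewLeftMul S A z (single y (γ y))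
      _ = ∑ z ∈ I, single (z * y) (γ (z * y)) :=
        Finset.sum_congr rfl fun z _ => by rw [skewLeftMul_single, hγ.apply_mul z hy]
      _ = ∑ w ∈ I.image (· * y), single w (γ w) :=
        (Finset.sum_image (f := fun w => single w (γ w)) (hI.injOn_mul_right y)).symm
      _ = γ.filter (· ∈ I.image (· * y)) := ext fun x => by
        simp only [finsetSum_apply, single_apply, Finset.sum_ite_eq', filter_apply]

theorem IsSkewInvariant.exists_eq_sum_skewLeftMul (hI : IsFiniteGroupLeftIdeal I)
    {γ : S →₀ A} (hγ : IsSkewInvariant S A γ) :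
    ∃ γ' : S →₀ A, γ = ∑ z ∈ I, skewLeftMul S A z γ' := by
  classical
  induction hn : γ.support.card using Nat.strong_induction_on generalizing γ with
  | _ n ih =>
    rcases eq_or_ne γ 0 with rfl | hγ0
    · exact ⟨0, by simp only [skewLeftMul_zero, Finset.sum_const_zero]⟩
    obtain ⟨y, hy⟩ := support_nonempty_iff.2 hγ0
    set O := I.image (· * y)
    have horbit := hγ.sum_skewLeftMul_single_eq_filter hI hy
    have hrest : IsSkewInvariant S A (γ.filter (· ∉ O)) := by
      rw [← add_sub_cancel_left (γ.filter (· ∈ O)) (γ.filter (· ∉ O)), filter_add_filter_not,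
        ← horbit]
      exact hγ.sub (hI.isSkewInvariant_sum_skewLeftMul _)
    have hcard : (γ.filter (· ∉ O)).support.card < n := by
      obtain ⟨t, ht⟩ := hI.1
      rw [support_filter, ← hn]
      exact Finset.card_lt_card (Finset.filter_ssubset.2
        ⟨t * y, hγ.mul_mem_support t hy, not_not.2 (Finset.mem_image_of_mem _ ht)⟩)
    obtain ⟨γ'', hγ''⟩ := ih _ hcard hrest rfl
    refine ⟨single y (γ y) + γ'', ?_⟩
    rw [Finset.sum_congr rfl fun z _ => skewLeftMul_add z _ _, Finset.sum_add_distrib, horbit,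
      ← hγ'', filter_add_filter_not]

end Invariants

theorem Finset.exists_isIdempotentElem {M : Type*} [Semigroup M] (F : Finset M)
    (hne : F.Nonempty) (hmul : ∀ x ∈ F, ∀ y ∈ F, x * y ∈ F) : ∃ e ∈ F, IsIdempotentElem e := by
  let _ : TopologicalSpace M := ⊥
  have : DiscreteTopology M := ⟨rfl⟩
  exact exists_idempotent_in_compact_subsemigroup (fun _ => continuous_of_discreteTopology)
    (F : Set M) hne F.finite_toSet.isCompact hmul

theorem Finset.isFiniteGroupLeftIdeal_image_mul_right {S : Type*} [Monoid S] [DecidableEq S]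
    {F : Finset S} (hmul : ∀ s, ∀ x ∈ F, s * x ∈ F) (hinj : ∀ s, Set.InjOn (s * ·) (F : Set S))
    {e : S} (heF : e ∈ F) (he : IsIdempotentElem e) : IsFiniteGroupLeftIdeal (F.image (· * e)) := by
  set I := F.image (· * e)
  have hIF : ∀ x ∈ I, x ∈ F := Finset.forall_mem_image.2 fun x _ => hmul x e heF
  have hmulI : ∀ s, ∀ x ∈ I, s * x ∈ I := fun s => Finset.forall_mem_image.2 fun x hx => by
    simpa only [mul_assoc] using Finset.mem_image_of_mem (· * e) (hmul s x hx)
  have heI : e ∈ I := he.eq ▸ Finset.mem_image_of_mem (· * e) heF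
  have hmul_e : ∀ x ∈ I, x * e = x := Finset.forall_mem_image.2 fun x _ => by
    rw [mul_assoc, he.eq]
  have he_mul : ∀ x ∈ I, e * x = x := fun x hx =>
    hinj e (hmul e x (hIF x hx)) (hIF x hx) (by simp only; rw [← mul_assoc, he.eq])
  refine ⟨⟨e, heI⟩, hmulI, e, heI, fun x hx => ⟨he_mul x hx, hmul_e x hx⟩, fun x hx => ?_⟩
  -- left multiplication by `x` is injective on the finite set `I`, hence onto `I ∋ e`
  obtain ⟨y, hy, hxy⟩ := Finset.surjOn_of_injOn_of_card_le (x * ·) (fun y hy => hmulI x y hy)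
    ((hinj x).mono fun y hy => hIF y hy) le_rfl heI
  refine ⟨y, hy, hxy, hinj x (hIF _ (hmulI y x hx)) (hIF e heI) ?_⟩
  simp only at hxy ⊢
  rw [← mul_assoc, hxy, he_mul x hx, hmul_e x hx]

theorem exists_isFiniteGroupLeftIdeal_iff {S : Type*} [Monoid S]
    (hcancel : ∀ a b c : S, a * b = a * c → b = c) :
    (∃ I : Finset S, IsFiniteGroupLeftIdeal I) ↔
      Finite S ∧ ∀ s : S, ∃ y : S, s * y = 1 ∧ y * s = 1 := by
  constructor
  · rintro ⟨I, -, hmul, e, heI, he, hinv⟩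
    obtain rfl : e = 1 := hcancel e e 1 (by rw [(he e heI).1, mul_one])
    have hall : ∀ s, s ∈ I := fun s => mul_one s ▸ hmul s 1 heI
    refine ⟨Set.finite_univ_iff.1 (I.finite_toSet.subset fun s _ => hall s), fun s => ?_⟩
    obtain ⟨y, -, hy⟩ := hinv s (hall s)
    exact ⟨y, hy⟩
  · rintro ⟨hfin, hgrp⟩
    have := Fintype.ofFinite S
    refine ⟨Finset.univ, Finset.univ_nonempty, fun _ _ _ => Finset.mem_univ _, 1,
      Finset.mem_univ _, fun x _ => ⟨one_mul x, mul_one x⟩, fun x _ => ?_⟩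
    obtain ⟨y, hy⟩ := hgrp x
    exact ⟨y, Finset.mem_univ _, hy⟩

section Existence

variable {S : Type*} {A : Type*} [Monoid S] [Ring A] [MulSemiringAction S A]

theorem IsSkewInvariant.exists_isFiniteGroupLeftIdeal {γ : S →₀ A} (hγ : IsSkewInvariant S A γ)
    (hγ0 : γ ≠ 0) : ∃ I : Finset S, IsFiniteGroupLeftIdeal I := by
  classical
  obtain ⟨e, heF, he⟩ := γ.support.exists_isIdempotentElem (support_nonempty_iff.2 hγ0)
    fun x _ _ hy => hγ.mul_mem_support x hy
  exact ⟨_, Finset.isFiniteGroupLeftIdeal_image_mul_right (fun s _ hx => hγ.mul_mem_support s hx)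
    hγ.injOn_mul_left heF he⟩

theorem IsFiniteGroupLeftIdeal.exists_isSkewInvariant_ne_zero [Nontrivial A] {I : Finset S}
    (hI : IsFiniteGroupLeftIdeal I) : ∃ γ : S →₀ A, γ ≠ 0 ∧ IsSkewInvariant S A γ := by
  classical
  obtain ⟨e, heI, he, -⟩ := hI.2.2
  refine ⟨∑ z ∈ I, skewLeftMul S A z (single e 1), fun h => one_ne_zero (α := A) ?_,
    hI.isSkewInvariant_sum_skewLeftMul _⟩
  have hsum : ∑ z ∈ I, skewLeftMul S A z (single e (1 : A)) = ∑ z ∈ I, single z 1 :=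
    Finset.sum_congr rfl fun z hz => by rw [skewLeftMul_single, (he z hz).2, smul_one]
  simpa only [hsum, finsetSum_apply, single_apply, Finset.sum_ite_eq', if_pos heI,
    Finsupp.zero_apply] using DFunLike.congr_fun h e

theorem IsFiniteGroupLeftIdeal.isSkewInvariant_iff {I : Finset S} (hI : IsFiniteGroupLeftIdeal I)
    (γ : S →₀ A) :
    IsSkewInvariant S A γ ↔ ∃ γ' : S →₀ A, γ = ∑ z ∈ I, skewLeftMul S A z γ' :=
  ⟨fun hγ => hγ.exists_eq_sum_skewLeftMul hI,
    fun ⟨γ', hγ'⟩ => hγ' ▸ hI.isSkewInvariant_sum_skewLeftMul γ'⟩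

end Existence

theorem skew_semigroup_ring_invariants_general (S : Type v) (A : Type w)
    [Monoid S] [Ring A] [MulSemiringAction S A] [Nontrivial A] :
    (∀ I : Finset S, IsFiniteGroupLeftIdeal I →
      ∀ γ : S →₀ A, IsSkewInvariant S A γ ↔
        ∃ γ' : S →₀ A, γ = ∑ z ∈ I, skewLeftMul S A z γ') ∧
    ((∃ γ : S →₀ A, γ ≠ 0 ∧ IsSkewInvariant S A γ) ↔
      ∃ I : Finset S, IsFiniteGroupLeftIdeal I) ∧
    ((∀ a b c : S, a * b = a * c → b = c) →
      ((∃ γ : S →₀ A, γ ≠ 0 ∧ IsSkewInvariant S A γ) ↔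
        (Finite S ∧ ∀ s : S, ∃ y : S, s * y = 1 ∧ y * s = 1))) := by
  have hnonzero : (∃ γ : S →₀ A, γ ≠ 0 ∧ IsSkewInvariant S A γ) ↔
      ∃ I : Finset S, IsFiniteGroupLeftIdeal I :=
    ⟨fun ⟨_, hγ0, hγ⟩ => hγ.exists_isFiniteGroupLeftIdeal hγ0,
      fun ⟨_, hI⟩ => hI.exists_isSkewInvariant_ne_zero⟩
  exact ⟨fun _ hI => hI.isSkewInvariant_iff, hnonzero,
    fun hcancel => hnonzero.trans (exists_isFiniteGroupLeftIdeal_iff hcancel)⟩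

/-- For a monoid `S` acting on an `R`-algebra `A` by endomorphisms, the `S`-invariant elements
of the skew semigroup ring `A*S` form a cyclic right ideal generated by `1*t` with
`t = Σ_{x ∈ I} x` for `I` a left ideal of `S` which is a finite group: invariant elements are
exactly the products `(1*t)·γ'`.  Consequently `Hom_{A*S}(A, A*S) ≠ 0` (equivalently, a
non-zero invariant element exists) iff `S` contains a left ideal which is a finite group, and
for `S` left cancellative iff `S` is a finite group. -/
theorem skew_semigroup_ring_invariants (R : Type u) (S : Type v) (A : Type w) [CommRing R]
    [Monoid S] [Ring A] [Algebra R A] [MulSemiringAction S A] [Nontrivial A] :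
    (∀ I : Finset S, IsFiniteGroupLeftIdeal I →
      ∀ γ : S →₀ A, IsSkewInvariant S A γ ↔
        ∃ γ' : S →₀ A, γ = ∑ z ∈ I, skewLeftMul S A z γ') ∧
    ((∃ γ : S →₀ A, γ ≠ 0 ∧ IsSkewInvariant S A γ) ↔
      ∃ I : Finset S, IsFiniteGroupLeftIdeal I) ∧
    ((∀ a b c : S, a * b = a * c → b = c) →
      ((∃ γ : S →₀ A, γ ≠ 0 ∧ IsSkewInvariant S A γ) ↔
        (Finite S ∧ ∀ s : S, ∃ y : S, s * y = 1 ∧ y * s = 1))) :=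
  skew_semigroup_ring_invariants_general S A
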